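/- Under the setting of the Bregman mirror step lemma, if f is convex and subdifferentiable at y with subgradient p = ∇f(y), then for z = Mirr_y(h·∇f(y)) and every x ∈ Q: h·(f(y) − f(x)) ≤ (h²/2)‖∇f(y)‖_*² + V(y, x) − V(z, x). -/

import Mathlib

/-!
The first-order optimality condition of the mirror step at `z` is
`0 ≤ ⟨h p + d'(z) - d'(y), x - z⟩`, and the three-point identity turns `⟨d'(z) - d'(y), x - z⟩`
into `V(y, x) - V(z, x) - V(y, z)`. Together with the subgradient inequality this gives
`h (f y - f x) ≤ h p (y - z) + V(y, x) - V(z, x) - V(y, z)`, and the leftover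
`h p (y - z) - V(y, z)` is at most `h² ‖p‖² / 2`, since `V(y, z) ≥ ‖z - y‖² / 2` by the strong
monotonicity of `d'`.
-/

open Set

section Bregman

variable {X : Type*} [NormedAddCommGroup X] [NormedSpace ℝ X]

/-- The Bregman divergence `V(u, x)` of `d` with base point `u`. -/
def bregmanDiv (d : X → ℝ) (d' : X → X →L[ℝ] ℝ) (u x : X) : ℝ :=
  d x - d u - d' u (x - u)

theorem bregmanDiv_three_point (d : X → ℝ) (d' : X → X →L[ℝ] ℝ) (x y z : X) :
    bregmanDiv d d' y x - bregmanDiv d d' z x - bregmanDiv d d' y z = (d' z - d' y) (x - z) := by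
  have hsplit : d' y (x - y) = d' y (x - z) + d' y (z - y) := by
    rw [← map_add, sub_add_sub_cancel]
  simp only [bregmanDiv, sub_apply, hsplit]
  ring

theorem hasFDerivAt_bregmanDiv {d : X → ℝ} {d' : X → X →L[ℝ] ℝ}
    (hd : ∀ x, HasFDerivAt d (d' x) x) (u x : X) :
    HasFDerivAt (bregmanDiv d d' u) (d' x - d' u) x :=
  ((hd x).sub_const (d u)).sub (((d' u).hasFDerivAt).comp x ((hasFDerivAt_id x).sub_const u))

theorem sq_norm_sub_div_two_le_bregmanDiv {d : X → ℝ} {d' : X → X →L[ℝ] ℝ}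
    (hd : ∀ x, HasFDerivAt d (d' x) x)
    (hstrong : ∀ x y : X, ‖x - y‖ ^ 2 ≤ (d' x - d' y) (x - y)) (y z : X) :
    ‖z - y‖ ^ 2 / 2 ≤ bregmanDiv d d' y z := by
  set w := z - y
  -- `φ' t = (d'(y + t w) - d'(y)) w - t ‖w‖²`, which is `≥ 0` for `t > 0` by strong monotonicity
  set φ : ℝ → ℝ := fun t => d (y + t • w) - t * d' y w - t ^ 2 / 2 * ‖w‖ ^ 2
  have hφ' : ∀ t : ℝ, HasDerivAt φ (d' (y + t • w) w - d' y w - t * ‖w‖ ^ 2) t := by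
    intro t
    have hline : HasDerivAt (fun t : ℝ => y + t • w) w t := by
      simpa using ((hasDerivAt_id t).smul_const w).const_add y
    have hquad : HasDerivAt (fun t : ℝ => t ^ 2 / 2 * ‖w‖ ^ 2) (t * ‖w‖ ^ 2) t := by
      refine (((hasDerivAt_pow 2 t).div_const 2).mul_const (‖w‖ ^ 2)).congr_deriv ?_
      push_cast
      ring
    exact (((hd _).comp_hasDerivAt t hline).sub
      ((hasDerivAt_id t).mul_const (d' y w) |>.congr_deriv (one_mul _))).sub hquad
  have hmono : MonotoneOn φ (Ici 0) := by
    refine monotoneOn_of_deriv_nonneg (convex_Ici 0)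
      (fun t _ => (hφ' t).continuousAt.continuousWithinAt)
      (fun t _ => (hφ' t).differentiableAt.differentiableWithinAt) fun t ht => ?_
    rw [interior_Ici, mem_Ioi] at ht
    have hs := hstrong (y + t • w) y
    rw [add_sub_cancel_left, map_smul, norm_smul, Real.norm_of_nonneg ht.le, mul_pow,
      smul_eq_mul, sub_apply] at hs
    rw [(hφ' t).deriv]
    nlinarith
  have h01 := hmono self_mem_Ici (show (0 : ℝ) ≤ 1 from zero_le_one) zero_le_one
  simp only [φ, zero_smul, add_zero, one_smul, zero_mul, one_mul, sub_zero, one_pow,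
    ne_eq, OfNat.ofNat_ne_zero, not_false_eq_true, zero_pow, zero_div] at h01
  rw [add_sub_cancel] at h01
  unfold bregmanDiv
  linarith

theorem variational_ineq_of_isMinOn_add_bregmanDiv {d : X → ℝ} {d' : X → X →L[ℝ] ℝ}
    (hd : ∀ x, HasFDerivAt d (d' x) x) {Q : Set X} (hQ : Convex ℝ Q) (ℓ : X →L[ℝ] ℝ) (y : X)
    {z : X} (hz : z ∈ Q)
    (hmin : ∀ u ∈ Q, ℓ z + bregmanDiv d d' y z ≤ ℓ u + bregmanDiv d d' y u)
    {x : X} (hx : x ∈ Q) : 0 ≤ ℓ (x - z) + (d' z - d' y) (x - z) :=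
  (isMinOn_iff.2 hmin).localize.hasFDerivWithinAt_nonneg
    (ℓ.hasFDerivAt.add (hasFDerivAt_bregmanDiv hd y z)).hasFDerivWithinAt
    (sub_mem_posTangentConeAt_of_segment_subset (hQ.segment_subset hz hx))

end Bregman

theorem stmt8_general (X : Type*) [NormedAddCommGroup X] [NormedSpace ℝ X]
    (d : X → ℝ) (d' : X → X →L[ℝ] ℝ)
    (hd : ∀ x, HasFDerivAt d (d' x) x)
    (hstrong : ∀ x y : X, ‖x - y‖ ^ 2 ≤ (d' x - d' y) (x - y))
    (Q : Set X) (hQ : Convex ℝ Q)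
    (y : X) (h : ℝ) (hh : 0 < h)
    (f : X → ℝ)
    (p : X →L[ℝ] ℝ) (hp : ∀ x ∈ Q, f y + p (x - y) ≤ f x)
    (z : X) (hz : z ∈ Q)
    (hmin : ∀ u ∈ Q, h * p z + (d z - d y - d' y (z - y))
      ≤ h * p u + (d u - d y - d' y (u - y))) :
    ∀ x ∈ Q, h * (f y - f x) ≤ h ^ 2 / 2 * ‖p‖ ^ 2
      + (d x - d y - d' y (x - y)) - (d x - d z - d' z (x - z)) := by
  intro x hx
  have hopt := variational_ineq_of_isMinOn_add_bregmanDiv hd hQ (h • p) y hz hmin hx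
  have hthree := bregmanDiv_three_point d d' x y z
  have hlower := sq_norm_sub_div_two_le_bregmanDiv hd hstrong y z
  have hsub : h * (f y - f x) ≤ h * (p (y - z) - p (x - z)) := by
    rw [← map_sub, sub_sub_sub_cancel_right, ← neg_sub x y, map_neg]
    exact mul_le_mul_of_nonneg_left (by linarith [hp x hx]) hh.le
  have hdual : h * p (y - z) ≤ h ^ 2 / 2 * ‖p‖ ^ 2 + ‖z - y‖ ^ 2 / 2 := by
    have hle : p (y - z) ≤ ‖p‖ * ‖z - y‖ :=
      (le_abs_self _).trans (norm_sub_rev y z ▸ p.le_opNorm (y - z))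
    nlinarith [two_mul_le_add_sq (h * ‖p‖) ‖z - y‖]
  simp only [smul_apply, smul_eq_mul] at hopt
  unfold bregmanDiv at hthree hlower
  linarith

theorem stmt8 (X : Type*) [NormedAddCommGroup X] [NormedSpace ℝ X]
    [FiniteDimensional ℝ X]
    (d : X → ℝ) (d' : X → X →L[ℝ] ℝ)
    (hd : ∀ x, HasFDerivAt d (d' x) x) (hd' : Continuous d')
    (hstrong : ∀ x y : X, ‖x - y‖ ^ 2 ≤ (d' x - d' y) (x - y))
    (Q : Set X) (hQc : IsClosed Q) (hQ : Convex ℝ Q)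
    (y : X) (hy : y ∈ Q) (h : ℝ) (hh : 0 < h)
    (f : X → ℝ) (hf : ConvexOn ℝ univ f)
    (p : X →L[ℝ] ℝ) (hp : ∀ x ∈ Q, f y + p (x - y) ≤ f x)
    (z : X) (hz : z ∈ Q)
    (hmin : ∀ u ∈ Q, h * p z + (d z - d y - d' y (z - y))
      ≤ h * p u + (d u - d y - d' y (u - y))) :
    ∀ x ∈ Q, h * (f y - f x) ≤ h ^ 2 / 2 * ‖p‖ ^ 2
      + (d x - d y - d' y (x - y)) - (d x - d z - d' z (x - z)) :=
  stmt8_general X d d' hd hstrong Q hQ y h hh f p hp z hz hmin
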